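/- arXiv:2106.13056 — 4 statements merged into one kernel-verified Lean document; each statement's English description precedes it below -/
import Mathlib

section
/- Let n ≥ 4 and let SD be the semidihedral group of order 2^n (the semidirect product (ZMod (2^(n-1))) ⋊ (ZMod 2) with action by multiplication by 2^(n-2) - 1). The subgroup of SD generated by all elements of order 2 has index 2 in SD, and is isomorphic to the dihedral group of order 2^(n-1). -/
/-!
In `ZMod (2 * m)` multiplication by `m` kills exactly the even elements, i.e. the image of the
doubling map `ZMod m → ZMod (2 * m)`. Hence the generator `t` of `ZMod 2`, acting by
`a ↦ m * a - a`, acts on the even elements by negation, and `r i ↦ (2 i, 1)`, `sr i ↦ (-2 i, t)`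
embeds the dihedral group of order `2 * m` as a subgroup of index 2. Every element of a dihedral
group is a product of at most two reflections, so this subgroup is generated by involutions.
Conversely, `(a, b)` squares to `1` only if `m * a = 0`: for `b = 1` because `2 * a = 0` and `m`
is even, for `b = t` because `a + (m * a - a) = 0`. So every involution lies in the subgroup.
-/

namespace Semidihedral

open Multiplicative

lemma range_le_closure_involutions {G : Type*} [Group G] {n : ℕ} {f : DihedralGroup n →* G}
    (hf : Function.Injective f) : f.range ≤ Subgroup.closure {g : G | g ≠ 1 ∧ g ^ 2 = 1} := by
  have hsr (i : ZMod n) : f (.sr i) ∈ Subgroup.closure {g : G | g ≠ 1 ∧ g ^ 2 = 1} :=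
    Subgroup.subset_closure ⟨(map_ne_one_iff f hf).2 nofun,
      by rw [← map_pow, sq, DihedralGroup.sr_mul_self, map_one]⟩
  rintro _ ⟨i | i, rfl⟩
  · rw [← sub_zero i, ← DihedralGroup.sr_mul_sr, map_mul]
    exact mul_mem (hsr 0) (hsr i)
  · exact hsr i

lemma two_mul_natCast_self (m : ℕ) : (2 * m : ZMod (2 * m)) = 0 := by
  exact_mod_cast ZMod.natCast_self (2 * m)

def doubling (m : ℕ) : ZMod m →+ ZMod (2 * m) :=
  ZMod.lift m ⟨zmultiplesHom _ 2, by simpa [mul_comm] using two_mul_natCast_self m⟩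

variable {m : ℕ}

lemma doubling_intCast (k : ℤ) : doubling m k = 2 * k := by
  simp [doubling, ZMod.lift_coe, mul_comm]

lemma doubling_injective : Function.Injective (doubling m) := by
  refine (injective_iff_map_eq_zero _).2 fun i hi => ?_
  obtain ⟨k, rfl⟩ := ZMod.intCast_surjective i
  rw [doubling_intCast, ← Int.cast_ofNat, ← Int.cast_mul,
    ZMod.intCast_zmod_eq_zero_iff_dvd] at hi
  rw [ZMod.intCast_zmod_eq_zero_iff_dvd]
  push_cast at hi
  exact Int.dvd_of_mul_dvd_mul_left two_ne_zero hi

lemma natCast_mul_eq_zero_iff_mem_range [NeZero m] (a : ZMod (2 * m)) :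
    (m : ZMod (2 * m)) * a = 0 ↔ a ∈ (doubling m).range := by
  constructor
  · intro h
    obtain ⟨k, rfl⟩ := ZMod.intCast_surjective a
    rw [← Int.cast_natCast, ← Int.cast_mul, ZMod.intCast_zmod_eq_zero_iff_dvd] at h
    push_cast at h
    rw [mul_comm 2] at h
    obtain ⟨j, rfl⟩ := Int.dvd_of_mul_dvd_mul_left (by exact_mod_cast NeZero.ne m) h
    exact ⟨j, by rw [doubling_intCast]; push_cast; ring⟩
  · rintro ⟨i, rfl⟩
    obtain ⟨j, rfl⟩ := ZMod.intCast_surjective i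
    rw [doubling_intCast, ← mul_assoc, mul_comm _ (2 : ZMod _), two_mul_natCast_self, zero_mul]

lemma eq_one_or_eq_ofAdd_one : ∀ b : Multiplicative (ZMod 2), b = 1 ∨ b = ofAdd 1 := by
  decide

def IsSemidihedral (φ : Multiplicative (ZMod 2) →* MulAut (Multiplicative (ZMod (2 * m)))) :
    Prop :=
  ∀ a : ZMod (2 * m), φ (ofAdd 1) (ofAdd a) = ofAdd (((m - 1 : ℕ) : ZMod (2 * m)) * a)

section SemidirectProduct

variable {φ : Multiplicative (ZMod 2) →* MulAut (Multiplicative (ZMod (2 * m)))} [NeZero m]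

lemma IsSemidihedral.apply_ofAdd (hφ : IsSemidihedral φ) (a : ZMod (2 * m)) :
    φ (ofAdd 1) (ofAdd a) = ofAdd (m * a - a) := by
  rw [hφ, Nat.cast_sub NeZero.one_le, Nat.cast_one, sub_one_mul]

lemma IsSemidihedral.apply_ofAdd_doubling (hφ : IsSemidihedral φ) (i : ZMod m) :
    φ (ofAdd 1) (ofAdd (doubling m i)) = ofAdd (doubling m (-i)) := by
  rw [hφ.apply_ofAdd, (natCast_mul_eq_zero_iff_mem_range _).2 ⟨i, rfl⟩, zero_sub,
    map_neg (doubling m)]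

def dihedralHom (hφ : IsSemidihedral φ) :
    DihedralGroup m →* Multiplicative (ZMod (2 * m)) ⋊[φ] Multiplicative (ZMod 2) where
  toFun
    | .r i => ⟨ofAdd (doubling m i), 1⟩
    | .sr i => ⟨ofAdd (doubling m (-i)), ofAdd 1⟩
  map_one' := by rw [DihedralGroup.one_def]; ext <;> simp
  map_mul' := by
    rintro (i | i) (j | j) <;>
      simp only [DihedralGroup.r_mul_r, DihedralGroup.r_mul_sr, DihedralGroup.sr_mul_r,
        DihedralGroup.sr_mul_sr] <;>
      ext <;>
      simp only [SemidirectProduct.mul_left, SemidirectProduct.mul_right, map_one,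
        MulAut.one_apply, hφ.apply_ofAdd_doubling, ← ofAdd_add, ← map_add]
    all_goals first | rfl | decide | (simp only [toAdd_ofAdd]; congr 1; abel)

lemma left_mem_range_doubling_of_sq_eq_one (hφ : IsSemidihedral φ) (hm : Even m)
    {g : Multiplicative (ZMod (2 * m)) ⋊[φ] Multiplicative (ZMod 2)} (hg : g ^ 2 = 1) :
    toAdd g.left ∈ (doubling m).range := by
  obtain ⟨x, b⟩ := g
  rw [← natCast_mul_eq_zero_iff_mem_range]
  have hx : toAdd x + toAdd (φ b x) = 0 := by
    simpa [sq] using congrArg (fun g => toAdd g.left) hg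
  obtain rfl | rfl := eq_one_or_eq_ofAdd_one b
  · obtain ⟨k, rfl⟩ := hm
    rw [map_one, MulAut.one_apply] at hx
    push_cast
    linear_combination (k : ZMod (2 * (k + k))) * hx
  · rw [← ofAdd_toAdd x, hφ.apply_ofAdd] at hx
    simp only [toAdd_ofAdd] at hx
    linear_combination hx

variable (hφ : IsSemidihedral φ)

@[simp]
lemma dihedralHom_r (i : ZMod m) : dihedralHom hφ (.r i) = ⟨ofAdd (doubling m i), 1⟩ := rfl

@[simp]
lemma dihedralHom_sr (i : ZMod m) :
    dihedralHom hφ (.sr i) = ⟨ofAdd (doubling m (-i)), ofAdd 1⟩ := rfl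

lemma dihedralHom_injective : Function.Injective (dihedralHom hφ) := by
  rintro (i | i) (j | j) h <;>
    simp only [dihedralHom_r, dihedralHom_sr, SemidirectProduct.ext_iff] at h
  · exact congrArg _ (doubling_injective (ofAdd.injective h.1))
  · exact absurd h.2 (by decide)
  · exact absurd h.2 (by decide)
  · exact congrArg _ (neg_injective (doubling_injective (ofAdd.injective h.1)))

lemma index_range_dihedralHom : (dihedralHom hφ).range.index = 2 := by
  have h := (dihedralHom hφ).range.index_mul_card
  rw [← Nat.card_congr (MonoidHom.ofInjective (dihedralHom_injective hφ)).toEquiv,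
    SemidirectProduct.card, Nat.card_congr toAdd, Nat.card_congr toAdd, Nat.card_zmod,
    Nat.card_zmod, DihedralGroup.nat_card, mul_comm] at h
  exact Nat.eq_of_mul_eq_mul_left (by have := NeZero.pos m; positivity) h

lemma mem_range_dihedralHom_of_sq_eq_one (hm : Even m)
    {g : Multiplicative (ZMod (2 * m)) ⋊[φ] Multiplicative (ZMod 2)} (hg : g ^ 2 = 1) :
    g ∈ (dihedralHom hφ).range := by
  obtain ⟨i, hi⟩ := left_mem_range_doubling_of_sq_eq_one hφ hm hg
  obtain ⟨x, b⟩ := g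
  obtain rfl | rfl := eq_one_or_eq_ofAdd_one b
  · exact ⟨.r i, by simp [hi]⟩
  · exact ⟨.sr (-i), by simp [hi]⟩

theorem closure_involutions_eq_range_dihedralHom (hm : Even m) :
    Subgroup.closure {g : Multiplicative (ZMod (2 * m)) ⋊[φ] Multiplicative (ZMod 2) |
      g ≠ 1 ∧ g ^ 2 = 1} = (dihedralHom hφ).range :=
  le_antisymm
    ((Subgroup.closure_le _).2 fun _ hg => mem_range_dihedralHom_of_sq_eq_one hφ hm hg.2)
    (range_le_closure_involutions (dihedralHom_injective hφ))

end SemidirectProduct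

end Semidihedral

/-- For `n ≥ 4`, in the semidihedral group of order `2^n` (the semidirect product
`(ZMod (2^(n-1))) ⋊ (ZMod 2)` with the nontrivial element acting by
multiplication by `2^(n-2) - 1`), the subgroup generated by all elements of
order 2 has index 2, and is isomorphic to the dihedral group of order `2^(n-1)`. -/
theorem semidihedral_involution_subgroup (n : ℕ) (hn : 4 ≤ n)
    (φ : Multiplicative (ZMod 2) →* MulAut (Multiplicative (ZMod (2 ^ (n - 1)))))
    (hφ : ∀ a : ZMod (2 ^ (n - 1)),
      φ (Multiplicative.ofAdd (1 : ZMod 2)) (Multiplicative.ofAdd a) =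
        Multiplicative.ofAdd (((2 ^ (n - 2) - 1 : ℕ) : ZMod (2 ^ (n - 1))) * a)) :
    (Subgroup.closure {g : Multiplicative (ZMod (2 ^ (n - 1))) ⋊[φ]
        Multiplicative (ZMod 2) | g ≠ 1 ∧ g ^ 2 = 1}).index = 2 ∧
    Nonempty ((Subgroup.closure {g : Multiplicative (ZMod (2 ^ (n - 1))) ⋊[φ]
        Multiplicative (ZMod 2) | g ≠ 1 ∧ g ^ 2 = 1}) ≃*
      DihedralGroup (2 ^ (n - 2))) := by
  have hN : 2 ^ (n - 1) = 2 * 2 ^ (n - 2) := by rw [← pow_succ']; congr 1; omega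
  have hm : Even (2 ^ (n - 2)) := (Nat.even_pow' (by omega)).2 even_two
  generalize 2 ^ (n - 1) = N at φ hφ hN ⊢
  subst hN
  rw [Semidihedral.closure_involutions_eq_range_dihedralHom hφ hm]
  exact ⟨Semidihedral.index_range_dihedralHom hφ,
    ⟨(MonoidHom.ofInjective (Semidihedral.dihedralHom_injective hφ)).symm⟩⟩
end

section
/- Let n ≥ 4 and let SD be the semidihedral group of order 2^n (the semidirect product (ZMod (2^(n-1))) ⋊ (ZMod 2) with action by multiplication by 2^(n-2) - 1). Then the subgroup ZMod (2^(n-1)) × {0} is the unique cyclic subgroup of SD of order 2^(n-1). -/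
open SemidirectProduct Multiplicative

/-- For `n ≥ 4`, in the semidihedral group of order `2^n` (the semidirect product
`(ZMod (2^(n-1))) ⋊ (ZMod 2)` with the nontrivial element acting by
multiplication by `2^(n-2) - 1`), the rotation subgroup `ZMod (2^(n-1)) × {0}`
(the range of `inl`) is the unique cyclic subgroup of order `2^(n-1)`. -/
theorem semidihedral_unique_cyclic_subgroup (n : ℕ) (hn : 4 ≤ n)
    (φ : Multiplicative (ZMod 2) →* MulAut (Multiplicative (ZMod (2 ^ (n - 1)))))
    (hφ : ∀ a : ZMod (2 ^ (n - 1)),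
      φ (Multiplicative.ofAdd (1 : ZMod 2)) (Multiplicative.ofAdd a) =
        Multiplicative.ofAdd (((2 ^ (n - 2) - 1 : ℕ) : ZMod (2 ^ (n - 1))) * a)) :
    ∀ H : Subgroup (Multiplicative (ZMod (2 ^ (n - 1))) ⋊[φ] Multiplicative (ZMod 2)),
      (IsCyclic H ∧ Nat.card H = 2 ^ (n - 1)) ↔
        H = (SemidirectProduct.inl :
          Multiplicative (ZMod (2 ^ (n - 1))) →*
            Multiplicative (ZMod (2 ^ (n - 1))) ⋊[φ] Multiplicative (ZMod 2)).range := by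
  haveI : NeZero (2 ^ (n - 1)) := ⟨by positivity⟩
  haveI : Finite (Multiplicative (ZMod (2 ^ (n - 1))) ⋊[φ] Multiplicative (ZMod 2)) :=
    Finite.of_injective (fun g => (g.left, g.right)) (fun a b h =>
      SemidirectProduct.ext (congrArg Prod.fst h) (congrArg Prod.snd h))
  have hcardrange : Nat.card
      (SemidirectProduct.inl :
          Multiplicative (ZMod (2 ^ (n - 1))) →*
            Multiplicative (ZMod (2 ^ (n - 1))) ⋊[φ] Multiplicative (ZMod 2)).range
      = 2 ^ (n - 1) := by
    rw [Nat.card_congr (MonoidHom.ofInjective SemidirectProduct.inl_injective).toEquiv.symm]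
    simp [Nat.card_zmod]
  intro H
  constructor
  · rintro ⟨hcyc, hcard⟩
    obtain ⟨g, hg⟩ := hcyc.exists_generator
    set g' : Multiplicative (ZMod (2 ^ (n - 1))) ⋊[φ] Multiplicative (ZMod 2) := ↑g
      with hg'
    have hzp : Subgroup.zpowers g' = H := by
      apply le_antisymm
      · rw [Subgroup.zpowers_le]; exact g.2
      · intro y hy
        obtain ⟨k, hk⟩ := hg ⟨y, hy⟩
        exact ⟨k, congrArg Subtype.val hk⟩
    have horder : orderOf g' = 2 ^ (n - 1) := by
      rw [← Nat.card_zpowers, hzp, hcard]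
    have hright : g'.right = 1 := by
      by_contra hr
      have hr1 : g'.right = Multiplicative.ofAdd (1 : ZMod 2) := by
        have h2 : ∀ y : Multiplicative (ZMod 2), y = 1 ∨ y = Multiplicative.ofAdd 1 := by decide
        rcases h2 g'.right with h | h
        · exact absurd h hr
        · exact h
      set x : ZMod (2 ^ (n - 1)) := Multiplicative.toAdd g'.left with hx
      set c : ZMod (2 ^ (n - 1)) := ((2 ^ (n - 2) : ℕ) : ZMod (2 ^ (n - 1))) with hc
      have h22 : ((2 ^ (n - 2) - 1 : ℕ) : ZMod (2 ^ (n - 1))) + 1 = c := by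
        rw [hc, Nat.cast_sub Nat.one_le_two_pow, Nat.cast_one]; ring
      have hgeq : g' = ⟨Multiplicative.ofAdd x, Multiplicative.ofAdd 1⟩ := by
        refine SemidirectProduct.ext ?_ hr1
        simp [hx]
      have hsq : g' ^ 2 = SemidirectProduct.inl (Multiplicative.ofAdd (c * x)) := by
        rw [hgeq, sq]
        refine SemidirectProduct.ext ?_ ?_
        · show Multiplicative.ofAdd x * φ (Multiplicative.ofAdd (1 : ZMod 2))
            (Multiplicative.ofAdd x) = _
          rw [hφ, ← ofAdd_add, left_inl, ← h22]
          congr 1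
          ring
        · show Multiplicative.ofAdd (1 : ZMod 2) * Multiplicative.ofAdd (1 : ZMod 2) = 1
          decide
      have hcc : c + c = 0 := by
        rw [hc, ← Nat.cast_add]
        have hpow : 2 ^ (n - 2) + 2 ^ (n - 2) = 2 ^ (n - 1) := by
          have h1 : n - 1 = n - 2 + 1 := by omega
          rw [h1, pow_succ]; ring
        rw [hpow, ZMod.natCast_self]
      have h4 : g' ^ 4 = 1 := by
        have : g' ^ 4 = (g' ^ 2) ^ 2 := by rw [← pow_mul]
        rw [this, hsq, ← map_pow, sq, ← ofAdd_add]
        have : c * x + c * x = 0 := by rw [← add_mul, hcc, zero_mul]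
        rw [this, ofAdd_zero, map_one]
      have hdvd : orderOf g' ∣ 4 := orderOf_dvd_of_pow_eq_one h4
      rw [horder] at hdvd
      have h8 : (8 : ℕ) ≤ 2 ^ (n - 1) := by
        calc (8 : ℕ) = 2 ^ 3 := by norm_num
        _ ≤ 2 ^ (n - 1) := Nat.pow_le_pow_right (by norm_num) (by omega)
      have := Nat.le_of_dvd (by norm_num) hdvd
      omega
    have hle : Subgroup.zpowers g' ≤ (SemidirectProduct.inl :
          Multiplicative (ZMod (2 ^ (n - 1))) →*
            Multiplicative (ZMod (2 ^ (n - 1))) ⋊[φ] Multiplicative (ZMod 2)).range := by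
      rw [Subgroup.zpowers_le]
      exact ⟨g'.left, SemidirectProduct.ext rfl hright.symm⟩
    rw [← hzp]
    exact Subgroup.eq_of_le_of_card_ge (hzp ▸ hle) (by rw [hcardrange, hzp, hcard])
  · rintro rfl
    refine ⟨?_, hcardrange⟩
    exact isCyclic_of_surjective (MonoidHom.rangeRestrict _)
      (MonoidHom.rangeRestrict_surjective _)
end

section
/- Let r be an odd prime, q an integer not divisible by r, and t an odd positive integer with r dividing q^t + 1. Then for every integer d ≥ 1, r does not divide (-q)^d + 1. -/
/-- Let `r` be an odd prime not dividing `q`, and `t` odd and positive with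
`r ∣ q^t + 1`. Then for every `d ≥ 1`, `r` does not divide `(-q)^d + 1`. -/
theorem odd_prime_not_dvd_neg_pow_add_one (r : ℕ) (hr : r.Prime) (hr2 : r ≠ 2)
    (q : ℤ) (hq : ¬ (r : ℤ) ∣ q) (t : ℕ) (ht : ¬ 2 ∣ t) (ht1 : 1 ≤ t)
    (h : (r : ℤ) ∣ q ^ t + 1) :
    ∀ d : ℕ, 1 ≤ d → ¬ (r : ℤ) ∣ (-q) ^ d + 1 := by
  intro d hd hdvd
  haveI : Fact r.Prime := ⟨hr⟩
  have ht' : Odd t := Nat.odd_iff.mpr (Nat.two_dvd_ne_zero.mp ht)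
  -- move to ZMod r
  have hqt : ((q : ZMod r)) ^ t = -1 := by
    have := (ZMod.intCast_zmod_eq_zero_iff_dvd (q ^ t + 1) r).mpr h
    push_cast at this
    linear_combination this
  have hyt : (-(q : ZMod r)) ^ t = 1 := by
    rw [ht'.neg_pow, hqt, neg_neg]
  have hyd : (-(q : ZMod r)) ^ d = -1 := by
    have := (ZMod.intCast_zmod_eq_zero_iff_dvd ((-q) ^ d + 1) r).mpr hdvd
    push_cast at this
    linear_combination this
  have h1 : (1 : ZMod r) = -1 := by
    calc (1 : ZMod r) = ((-(q : ZMod r)) ^ t) ^ d := by rw [hyt, one_pow]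
    _ = ((-(q : ZMod r)) ^ d) ^ t := by rw [← pow_mul, mul_comm, pow_mul]
    _ = -1 := by rw [hyd, ht'.neg_one_pow]
  have h2 : (2 : ZMod r) = 0 := by linear_combination h1
  have : (r : ℕ) ∣ 2 := by
    have := (ZMod.natCast_eq_zero_iff 2 r).mp (by exact_mod_cast h2)
    exact this
  exact hr2 ((Nat.prime_dvd_prime_iff_eq hr Nat.prime_two).mp this)
end

section
/- Every Sylow 2-subgroup of the alternating group Alt(7) has order 8 and is isomorphic to the dihedral group of order 8 (DihedralGroup 4). -/
open Equiv

private def aperm : Equiv.Perm (Fin 7) := c[0, 1, 2, 3] * c[4, 5]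
private def bperm : Equiv.Perm (Fin 7) := c[0, 2] * c[4, 5]

private lemma ha : aperm ∈ alternatingGroup (Fin 7) := by rw [Equiv.Perm.mem_alternatingGroup]; decide
private lemma hb : bperm ∈ alternatingGroup (Fin 7) := by rw [Equiv.Perm.mem_alternatingGroup]; decide

private def f : DihedralGroup 4 → alternatingGroup (Fin 7)
  | .r i => ⟨aperm ^ i.val, pow_mem ha _⟩
  | .sr i => ⟨bperm * aperm ^ i.val, mul_mem hb (pow_mem ha _)⟩

private def φ : DihedralGroup 4 →* alternatingGroup (Fin 7) where
  toFun := f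
  map_one' := by decide
  map_mul' := by decide

private lemma φinj : Function.Injective φ := by
  have : ∀ x y : DihedralGroup 4, φ x = φ y → x = y := by decide
  exact fun x y => this x y

private lemma cardA7 : Nat.card (alternatingGroup (Fin 7)) = 2520 := by
  have h := two_mul_card_alternatingGroup (α := Fin 7)
  rw [Fintype.card_perm, Fintype.card_fin] at h
  have h5 : Nat.factorial 7 = 5040 := by decide
  rw [h5] at h
  rw [Nat.card_eq_fintype_card]
  omega

private lemma fact2520 : (Nat.factorization 2520) 2 = 3 := by
  have h : (2520 : ℕ) = 2 ^ 3 * 315 := by norm_num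
  have h8 : (Nat.factorization (2 ^ 3)) 2 = 3 := by
    rw [Nat.Prime.factorization_pow Nat.prime_two]
    simp
  rw [h, Nat.factorization_mul (by norm_num) (by norm_num), Finsupp.add_apply, h8,
    Nat.factorization_eq_zero_of_not_dvd (by norm_num : ¬ (2:ℕ) ∣ 315)]

/-- Every Sylow 2-subgroup of the alternating group on 7 letters has order 8 and
is isomorphic to the dihedral group of order 8. -/
theorem alternatingGroup7_sylow_two (P : Sylow 2 (alternatingGroup (Fin 7))) :
    Nat.card P = 8 ∧ Nonempty (P ≃* DihedralGroup 4) := by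
  have hmult : ∀ Q : Sylow 2 (alternatingGroup (Fin 7)), Nat.card Q = 8 := by
    intro Q
    rw [Q.card_eq_multiplicity, cardA7, fact2520]; norm_num
  refine ⟨hmult P, ?_⟩
  have hcard : Nat.card φ.range = 8 := by
    rw [Nat.card_congr (MonoidHom.ofInjective φinj).toEquiv.symm]
    simp [Nat.card_eq_fintype_card, DihedralGroup.card]
  have hpg : IsPGroup 2 φ.range := IsPGroup.of_card (n := 3) (by rw [hcard]; norm_num)
  obtain ⟨Q, hQ⟩ := hpg.exists_le_sylow
  have heq : φ.range = Q.toSubgroup :=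
    Subgroup.eq_of_le_of_card_ge hQ (by rw [hcard, hmult Q])
  exact ⟨(Sylow.equiv P Q).trans ((MulEquiv.subgroupCongr heq.symm).trans
    (MonoidHom.ofInjective φinj).symm)⟩
end
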